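/- arXiv:2312.03765 — 5 statements merged into one kernel-verified Lean document; each statement's English description precedes it below -/
import Mathlib

section
/- If X is a topological space and f, g : X → ℝ are functions of the first Borel class (i.e., the preimage of every open set is an Fσ set), then f + g is also of the first Borel class. -/
open Set Filter Topology

def IsFSigma {X : Type*} [TopologicalSpace X] (s : Set X) : Prop :=
  ∃ F : ℕ → Set X, (∀ n, IsClosed (F n)) ∧ s = ⋃ n, F n

def FirstBorelClass {X Y : Type*} [TopologicalSpace X] [TopologicalSpace Y] (f : X → Y) : Prop :=
  ∀ U : Set Y, IsOpen U → IsFSigma (f ⁻¹' U)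

lemma isFSigma_empty {X : Type*} [TopologicalSpace X] : IsFSigma (∅ : Set X) :=
  ⟨fun _ => ∅, fun _ => isClosed_empty, by simp⟩

lemma isFSigma_inter {X : Type*} [TopologicalSpace X] {s t : Set X}
    (hs : IsFSigma s) (ht : IsFSigma t) : IsFSigma (s ∩ t) := by
  obtain ⟨F, hF, rfl⟩ := hs
  obtain ⟨G, hG, rfl⟩ := ht
  refine ⟨fun n => F n.unpair.1 ∩ G n.unpair.2,
    fun n => (hF _).inter (hG _), ?_⟩
  rw [Set.iUnion_unpair (fun i j => F i ∩ G j)]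
  rw [Set.iUnion_inter, iUnion_congr fun i => (Set.inter_iUnion _ _).symm]

lemma isFSigma_iUnion {X ι : Type*} [TopologicalSpace X] [Countable ι] {s : ι → Set X}
    (h : ∀ i, IsFSigma (s i)) : IsFSigma (⋃ i, s i) := by
  cases isEmpty_or_nonempty ι with
  | inl hι => simpa [iUnion_of_empty] using isFSigma_empty
  | inr hι =>
    obtain ⟨e, he⟩ := exists_surjective_nat ι
    choose F hF hFs using h
    refine ⟨fun n => F (e n.unpair.1) n.unpair.2, fun n => hF _ _, ?_⟩
    rw [Set.iUnion_unpair (fun i j => F (e i) j)]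
    rw [← he.iUnion_comp (g := fun i => s i)]
    exact iUnion_congr fun i => hFs (e i)

theorem sum_firstBorelClass {X : Type*} [TopologicalSpace X] (f g : X → ℝ)
    (hf : FirstBorelClass f) (hg : FirstBorelClass g) :
    FirstBorelClass (f + g) := by
  intro U hU
  classical
  -- index: quadruples of rationals (p₁, p₂, q₁, q₂)
  have key : (f + g) ⁻¹' U =
      ⋃ q : ℚ × ℚ × ℚ × ℚ,
        if (∀ a ∈ Ioo (q.1 : ℝ) q.2.1, ∀ b ∈ Ioo (q.2.2.1 : ℝ) q.2.2.2, a + b ∈ U) then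
          f ⁻¹' Ioo (q.1 : ℝ) q.2.1 ∩ g ⁻¹' Ioo (q.2.2.1 : ℝ) q.2.2.2
        else ∅ := by
    ext x
    simp only [mem_preimage, Pi.add_apply, mem_iUnion]
    constructor
    · intro hx
      obtain ⟨ε, hε, hball⟩ := Metric.isOpen_iff.1 hU _ hx
      obtain ⟨p₁, hp₁, hp₁'⟩ := exists_rat_btwn (show f x - ε / 4 < f x by linarith)
      obtain ⟨p₂, hp₂, hp₂'⟩ := exists_rat_btwn (show f x < f x + ε / 4 by linarith)
      obtain ⟨q₁, hq₁, hq₁'⟩ := exists_rat_btwn (show g x - ε / 4 < g x by linarith)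
      obtain ⟨q₂, hq₂, hq₂'⟩ := exists_rat_btwn (show g x < g x + ε / 4 by linarith)
      refine ⟨(p₁, p₂, q₁, q₂), ?_⟩
      rw [if_pos]
      · exact ⟨⟨hp₁', hp₂⟩, ⟨hq₁', hq₂⟩⟩
      · rintro a ⟨ha₁, ha₂⟩ b ⟨hb₁, hb₂⟩
        apply hball
        rw [Metric.mem_ball, Real.dist_eq, abs_sub_lt_iff]
        constructor <;> linarith
    · rintro ⟨q, hq⟩
      split_ifs at hq with h
      · exact h _ hq.1 _ hq.2
      · exact absurd hq (notMem_empty x)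
  rw [key]
  apply isFSigma_iUnion
  intro q
  split_ifs with h
  · exact isFSigma_inter (hf _ isOpen_Ioo) (hg _ isOpen_Ioo)
  · exact isFSigma_empty
end

section
/- Let X be a topological space, A ⊆ X a set that is both Fσ and Gδ in X, and g : X \ A → A a continuous map. Define φ : X → X by φ(x) = x for x ∈ A and φ(x) = g(x) for x ∈ X \ A. Then φ is piecewise continuous: there is an increasing sequence (Hₙ) of closed subsets of X with ⋃ₙ Hₙ = X such that the restriction of φ to each Hₙ is continuous. -/
open Set Filter Topology

/-! `X = A ∪ Aᶜ` is a union of two Fσ sets (`Aᶜ` because `A` is Gδ), say `A = ⋃ Fₙ` and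
`Aᶜ = ⋃ Gₙ`, so `X` is exhausted by the increasing closed sets `F₀ ∪ … ∪ Fₙ ∪ G₀ ∪ … ∪ Gₙ`.
On each of them `φ` is continuous: it is the identity on the closed part inside `A`, it is `g` on
the closed part inside `Aᶜ`, and continuity on two closed sets passes to their union. -/

section

variable {X Y : Type*} [TopologicalSpace X]

def PiecewiseContinuous [TopologicalSpace Y] (f : X → Y) : Prop :=
  ∃ H : ℕ → Set X, Monotone H ∧ (∀ n, IsClosed (H n)) ∧ (⋃ n, H n) = univ ∧
    ∀ n, ContinuousOn f (H n)

lemma isClosed_accumulate {F : ℕ → Set X} (hF : ∀ n, IsClosed (F n)) (n : ℕ) :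
    IsClosed (accumulate F n) := by
  rw [accumulate_def]
  exact (finite_Iic n).isClosed_biUnion fun i _ => hF i

lemma IsGδ.isFSigma_compl {s : Set X} (hs : IsGδ s) : IsFSigma sᶜ := by
  obtain ⟨U, hUo, rfl⟩ := hs.eq_iInter_nat
  exact ⟨fun n => (U n)ᶜ, fun n => (hUo n).isClosed_compl, compl_iInter U⟩

lemma piecewiseContinuous_of_isFSigma_cover [TopologicalSpace Y] {f : X → Y} {s t : Set X}
    (hs : IsFSigma s) (ht : IsFSigma t) (hst : s ∪ t = univ)
    (hfs : ContinuousOn f s) (hft : ContinuousOn f t) : PiecewiseContinuous f := by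
  obtain ⟨F, hFcl, rfl⟩ := hs
  obtain ⟨G, hGcl, rfl⟩ := ht
  refine ⟨fun n => accumulate F n ∪ accumulate G n,
    fun m n hmn => union_subset_union (monotone_accumulate hmn) (monotone_accumulate hmn),
    fun n => (isClosed_accumulate hFcl n).union (isClosed_accumulate hGcl n), ?_, fun n => ?_⟩
  · rw [← hst, iUnion_union_distrib, iUnion_accumulate, iUnion_accumulate]
  · exact (hfs.mono (accumulate_subset_iUnion n)).union_of_isClosed
      (hft.mono (accumulate_subset_iUnion n)) (isClosed_accumulate hFcl n)
      (isClosed_accumulate hGcl n)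

end

theorem retraction_piecewise_continuous_general {X : Type*} [TopologicalSpace X] (A : Set X)
    (hFσ : IsFSigma A) (hGδ : IsGδ A)
    (g : X → X) (hg : ContinuousOn g Aᶜ)
    (φ : X → X) (hφ₁ : ∀ x ∈ A, φ x = x) (hφ₂ : ∀ x ∉ A, φ x = g x) :
    ∃ H : ℕ → Set X, Monotone H ∧ (∀ n, IsClosed (H n)) ∧ (⋃ n, H n) = univ ∧
      ∀ n, ContinuousOn φ (H n) :=
  piecewiseContinuous_of_isFSigma_cover hFσ hGδ.isFSigma_compl (union_compl_self A)
    (continuousOn_id.congr hφ₁) (hg.congr hφ₂)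

theorem retraction_piecewise_continuous {X : Type*} [TopologicalSpace X] (A : Set X)
    (hFσ : IsFSigma A) (hGδ : IsGδ A)
    (g : X → X) (hg : ContinuousOn g Aᶜ) (hgA : MapsTo g Aᶜ A)
    (φ : X → X) (hφ₁ : ∀ x ∈ A, φ x = x) (hφ₂ : ∀ x ∉ A, φ x = g x) :
    ∃ H : ℕ → Set X, Monotone H ∧ (∀ n, IsClosed (H n)) ∧ (⋃ n, H n) = univ ∧
      ∀ n, ContinuousOn φ (H n) :=
  retraction_piecewise_continuous_general A hFσ hGδ g hg φ hφ₁ hφ₂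
end

section
/- Let X be a topological space, A ⊆ X both Fσ and Gδ in X, and g : X \ A → A continuous. Define φ : X → X by φ(x) = x for x ∈ A and φ(x) = g(x) otherwise. Then for every closed set F ⊆ X, the preimage φ⁻¹(F) is an Fσ subset of X (i.e., φ is of the first level Borel class). -/
open Set Filter Topology

lemma isFSigma_inter_closed {X : Type*} [TopologicalSpace X] {s C : Set X}
    (hs : IsFSigma s) (hC : IsClosed C) : IsFSigma (s ∩ C) := by
  obtain ⟨F, hF, rfl⟩ := hs
  exact ⟨fun n => F n ∩ C, fun n => (hF n).inter hC, by rw [iUnion_inter]⟩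

lemma isFSigma_union {X : Type*} [TopologicalSpace X] {s t : Set X}
    (hs : IsFSigma s) (ht : IsFSigma t) : IsFSigma (s ∪ t) := by
  obtain ⟨F, hF, rfl⟩ := hs
  obtain ⟨G, hG, rfl⟩ := ht
  refine ⟨fun n => if Even n then F (n / 2) else G (n / 2),
    fun n => by dsimp only; split <;> [exact hF _; exact hG _], ?_⟩
  ext x
  simp only [mem_union, mem_iUnion]
  constructor
  · rintro (⟨n, hn⟩ | ⟨n, hn⟩)
    · exact ⟨2 * n, by simp [hn]⟩
    · refine ⟨2 * n + 1, ?_⟩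
      have : ¬ Even (2 * n + 1) := by simp [parity_simps]
      simp [this, hn, Nat.mul_add_div]
  · rintro ⟨n, hn⟩
    by_cases h : Even n
    · simp only [h, if_true] at hn; exact Or.inl ⟨n / 2, hn⟩
    · simp only [h, if_false] at hn; exact Or.inr ⟨n / 2, hn⟩

lemma isFSigma_compl_of_isGδ {X : Type*} [TopologicalSpace X] {s : Set X}
    (hs : IsGδ s) : IsFSigma sᶜ := by
  obtain ⟨T, hTopen, hTc, rfl⟩ := hs
  rcases eq_empty_or_nonempty T with rfl | hne
  · refine ⟨fun _ => ∅, fun _ => isClosed_empty, ?_⟩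
    simp
  · obtain ⟨f, rfl⟩ := hTc.exists_eq_range hne
    refine ⟨fun n => (f n)ᶜ, fun n => (hTopen _ ⟨n, rfl⟩).isClosed_compl, ?_⟩
    rw [sInter_range, compl_iInter]

theorem retraction_first_level_Borel {X : Type*} [TopologicalSpace X] (A : Set X)
    (hFσ : IsFSigma A) (hGδ : IsGδ A)
    (g : X → X) (hg : ContinuousOn g Aᶜ) (hgA : MapsTo g Aᶜ A)
    (φ : X → X) (hφ₁ : ∀ x ∈ A, φ x = x) (hφ₂ : ∀ x ∉ A, φ x = g x) :
    ∀ F : Set X, IsClosed F → IsFSigma (φ ⁻¹' F) := by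
  intro F hF
  obtain ⟨u, hu, huA⟩ := (continuousOn_iff'.mp hg) Fᶜ hF.isOpen_compl
  have key : φ ⁻¹' F = (A ∩ F) ∪ (uᶜ ∩ Aᶜ) := by
    ext x
    by_cases hx : x ∈ A
    · simp only [mem_preimage, hφ₁ x hx, mem_union, mem_inter_iff, hx, mem_compl_iff,
        not_true, and_false, or_false, true_and]
    · have hgx : x ∈ g ⁻¹' Fᶜ ↔ x ∈ u := by
        constructor
        · intro h
          have : x ∈ g ⁻¹' Fᶜ ∩ Aᶜ := ⟨h, hx⟩
          rw [huA] at this; exact this.1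
        · intro h
          have : x ∈ u ∩ Aᶜ := ⟨h, hx⟩
          rw [← huA] at this; exact this.1
      simp only [mem_preimage, hφ₂ x hx, mem_union, mem_inter_iff, hx, mem_compl_iff,
        false_and, false_or, not_false_iff, and_true]
      rw [← not_iff_not]
      simpa using hgx
  rw [key]
  exact isFSigma_union (isFSigma_inter_closed hFσ hF)
    (isFSigma_inter_closed (isFSigma_compl_of_isGδ hGδ) hu.isClosed_compl |>.imp
      (fun _ h => h) |> fun h => by rwa [inter_comm] at h)
end

section
/- There exists a bounded Baire-one function f : ℚ ∩ [0,1] → ℝ that cannot be extended to a Baire-one function on [0,1]. -/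
open Set Filter Topology

/-- The set of dyadic rational reals. -/
def Dyad : Set ℝ := {x | ∃ (k : ℤ) (n : ℕ), x * 2 ^ n = (k : ℝ)}

lemma one_third_not_dyad : (3 : ℝ)⁻¹ ∉ Dyad := by
  rintro ⟨k, n, h⟩
  have h3 : (2 : ℝ) ^ n = 3 * k := by
    field_simp at h
    linarith
  have h4 : (2 : ℤ) ^ n = 3 * k := by exact_mod_cast h3
  have h5 : (3 : ℤ) ∣ 2 ^ n := ⟨k, h4⟩
  have h6 : (3 : ℕ) ∣ 2 ^ n := by exact_mod_cast h5
  have := Nat.Prime.dvd_of_dvd_pow Nat.prime_three h6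
  omega

lemma dyad_sub {x y : ℝ} (hx : x ∈ Dyad) (hy : y ∈ Dyad) : x - y ∈ Dyad := by
  obtain ⟨k, n, hk⟩ := hx
  obtain ⟨l, m, hl⟩ := hy
  refine ⟨k * 2 ^ m - l * 2 ^ n, n + m, ?_⟩
  push_cast
  linear_combination (2 : ℝ) ^ m * hk - (2 : ℝ) ^ n * hl

lemma dyad_mul_two_pow {x : ℝ} (m : ℕ) (hx : x ∈ Dyad) : x * 2 ^ m ∈ Dyad := by
  obtain ⟨k, n, hk⟩ := hx
  exact ⟨k * 2 ^ m, n, by push_cast; linear_combination (2 : ℝ) ^ m * hk⟩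

lemma exists_dyadic_btwn {a b : ℝ} (h : a < b) :
    ∃ q : ℚ, (q : ℝ) ∈ Set.Ioo a b ∧ (q : ℝ) ∈ Dyad := by
  obtain ⟨n, hn⟩ := pow_unbounded_of_one_lt (b - a)⁻¹ (one_lt_two (α := ℝ))
  have hpos : (0 : ℝ) < 2 ^ n := by positivity
  have hba : (0 : ℝ) < b - a := by linarith
  have h1 : 1 < (b - a) * 2 ^ n := by
    have h' := mul_lt_mul_of_pos_left hn hba
    rwa [mul_inv_cancel₀ hba.ne'] at h'
  set k : ℤ := ⌊a * 2 ^ n⌋ + 1 with hkdef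
  have hlow : a * 2 ^ n < (k : ℝ) := by
    have := Int.lt_floor_add_one (a * 2 ^ n)
    push_cast [hkdef]
    linarith
  have hhigh : (k : ℝ) < b * 2 ^ n := by
    have := Int.floor_le (a * 2 ^ n)
    push_cast [hkdef]
    nlinarith
  refine ⟨(k : ℚ) / (2 : ℚ) ^ n, ⟨?_, ?_⟩, ⟨k, n, ?_⟩⟩
  · push_cast
    rw [lt_div_iff₀ hpos]
    exact hlow
  · push_cast
    rw [div_lt_iff₀ hpos]
    exact hhigh
  · push_cast
    field_simp

lemma exists_nondyadic_rat_btwn {a b : ℝ} (h : a < b) :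
    ∃ q : ℚ, (q : ℝ) ∈ Set.Ioo a b ∧ (q : ℝ) ∉ Dyad := by
  obtain ⟨d, ⟨hd1, hd2⟩, hdD⟩ := exists_dyadic_btwn h
  obtain ⟨m, hm⟩ := pow_unbounded_of_one_lt (b - (d : ℝ))⁻¹ (one_lt_two (α := ℝ))
  have hpos : (0 : ℝ) < 2 ^ m := by positivity
  have hbd : (0 : ℝ) < b - d := by linarith
  have h1 : 1 < (b - (d : ℝ)) * 2 ^ m := by
    have h' := mul_lt_mul_of_pos_left hm hbd
    rwa [mul_inv_cancel₀ hbd.ne'] at h'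
  refine ⟨d + 1 / (3 * 2 ^ m), ⟨?_, ?_⟩, ?_⟩
  · push_cast
    have : (0 : ℝ) < 1 / (3 * 2 ^ m) := by positivity
    linarith
  · push_cast
    have h2 : (1 : ℝ) / (3 * 2 ^ m) < (b - d) := by
      rw [div_lt_iff₀ (by positivity)]
      nlinarith
    linarith
  · intro hD
    push_cast at hD
    have hsub : ((d : ℝ) + 1 / (3 * 2 ^ m)) - (d : ℝ) ∈ Dyad := dyad_sub hD hdD
    have hsub' : (1 : ℝ) / (3 * 2 ^ m) ∈ Dyad := by
      simpa using hsub
    have := dyad_mul_two_pow m hsub'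
    have heq : (1 : ℝ) / (3 * 2 ^ m) * 2 ^ m = (3 : ℝ)⁻¹ := by
      field_simp
    rw [heq] at this
    exact one_third_not_dyad this

theorem exists_baire_one_not_extendable :
    ∃ f : {x : ℝ // x ∈ Set.Icc (0:ℝ) 1 ∧ ∃ q : ℚ, (q : ℝ) = x} → ℝ,
      Bornology.IsBounded (range f) ∧
      (∃ fₙ : ℕ → {x : ℝ // x ∈ Set.Icc (0:ℝ) 1 ∧ ∃ q : ℚ, (q : ℝ) = x} → ℝ,
        (∀ n, Continuous (fₙ n)) ∧ ∀ x, Tendsto (fun n => fₙ n x) atTop (𝓝 (f x))) ∧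
      ¬ ∃ F : (Set.Icc (0:ℝ) 1) → ℝ,
        (∃ Fₙ : ℕ → (Set.Icc (0:ℝ) 1) → ℝ, (∀ n, Continuous (Fₙ n)) ∧
          ∀ x, Tendsto (fun n => Fₙ n x) atTop (𝓝 (F x))) ∧
        (∀ (x : ℝ) (hx : x ∈ Set.Icc (0:ℝ) 1 ∧ ∃ q : ℚ, (q : ℝ) = x),
          F ⟨x, hx.1⟩ = f ⟨x, hx⟩) := by
  classical
  set Q := {x : ℝ // x ∈ Set.Icc (0:ℝ) 1 ∧ ∃ q : ℚ, (q : ℝ) = x} with hQdef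
  refine ⟨fun s => if (s : ℝ) ∈ Dyad then (1 : ℝ) else 0, ?_, ?_, ?_⟩
  · -- bounded
    refine (Metric.isBounded_Icc (0 : ℝ) 1).subset ?_
    rintro y ⟨s, rfl⟩
    by_cases hs : (s : ℝ) ∈ Dyad <;> simp [hs]
  · -- Baire one on the rationals of [0,1]
    haveI : Countable Q := by
      have hS : ({x : ℝ | x ∈ Set.Icc (0:ℝ) 1 ∧ ∃ q : ℚ, (q : ℝ) = x}).Countable := by
        refine (Set.countable_range ((↑) : ℚ → ℝ)).mono ?_
        rintro x ⟨-, q, rfl⟩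
        exact ⟨q, rfl⟩
      exact hS.to_subtype
    haveI : Nonempty Q := ⟨⟨0, ⟨by norm_num, 0, by norm_num⟩⟩⟩
    obtain ⟨e, he⟩ := exists_surjective_nat Q
    set g : Q → ℝ := fun s => if (s : ℝ) ∈ Dyad then (1 : ℝ) else 0 with hgdef
    refine ⟨fun n s =>
      (Lagrange.interpolate ((Finset.range (n + 1)).image e) (fun t : Q => (t : ℝ)) g).eval
        (s : ℝ), fun n => ?_, fun x => ?_⟩
    · exact (Polynomial.continuous _).comp continuous_subtype_val
    · obtain ⟨N, hN⟩ := he x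
      have hev : ∀ᶠ n in atTop, g x =
          (Lagrange.interpolate ((Finset.range (n + 1)).image e) (fun t : Q => (t : ℝ)) g).eval
            (x : ℝ) := by
        refine eventually_atTop.2 ⟨N, fun n hn => ?_⟩
        have hx : x ∈ (Finset.range (n + 1)).image e :=
          Finset.mem_image.2 ⟨N, Finset.mem_range.2 (by omega), hN⟩
        exact (Lagrange.eval_interpolate_at_node g
          (Set.injOn_of_injective Subtype.val_injective) hx).symm
      exact Tendsto.congr' hev tendsto_const_nhds
  · -- no Baire-one extension
    rintro ⟨F, ⟨Fn, hFnc, hFnt⟩, hext⟩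
    haveI : Nonempty (Set.Icc (0:ℝ) 1) := ⟨⟨0, by norm_num⟩⟩
    haveI : CompleteSpace (Set.Icc (0:ℝ) 1) := (isClosed_Icc).completeSpace_coe
    set A : ℕ → Set (Set.Icc (0:ℝ) 1) := fun n =>
      {x | ∀ p q, n ≤ p → n ≤ q → dist (Fn p x) (Fn q x) ≤ 4⁻¹} with hAdef
    have hAclosed : ∀ n, IsClosed (A n) := by
      intro n
      have : A n = ⋂ p, ⋂ q, ⋂ (_ : n ≤ p), ⋂ (_ : n ≤ q),
          {x | dist (Fn p x) (Fn q x) ≤ 4⁻¹} := by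
        ext x
        simp only [hAdef, Set.mem_setOf_eq, Set.mem_iInter]
      rw [this]
      refine isClosed_iInter fun p => isClosed_iInter fun q =>
        isClosed_iInter fun _ => isClosed_iInter fun _ => ?_
      exact isClosed_le ((hFnc p).dist (hFnc q)) continuous_const
    have hAcover : ⋃ n, A n = Set.univ := by
      refine Set.eq_univ_iff_forall.2 fun x => ?_
      have hc : CauchySeq fun n => Fn n x := (hFnt x).cauchySeq
      obtain ⟨N, hN⟩ := Metric.cauchySeq_iff.1 hc 4⁻¹ (by norm_num)
      exact Set.mem_iUnion.2 ⟨N, fun p q hp hq => le_of_lt (hN p hp q hq)⟩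
    obtain ⟨n, z, hz⟩ := nonempty_interior_of_iUnion_of_closed hAclosed hAcover
    have hAF : ∀ x ∈ A n, dist (Fn n x) (F x) ≤ 4⁻¹ := by
      intro x hx
      refine le_of_tendsto (tendsto_const_nhds.dist (hFnt x)) ?_
      exact eventually_atTop.2 ⟨n, fun q hq => hx n q le_rfl hq⟩
    -- a neighbourhood of z on which Fn n is within 8⁻¹ of Fn n z, intersected with A n
    have h1 : (Fn n) ⁻¹' Metric.ball (Fn n z) 8⁻¹ ∈ 𝓝 z :=
      (hFnc n).continuousAt.preimage_mem_nhds (Metric.ball_mem_nhds _ (by norm_num))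
    have h2 : interior (A n) ∈ 𝓝 z := isOpen_interior.mem_nhds hz
    obtain ⟨U, hU, hUsub⟩ := (mem_nhds_subtype _ z _).1 (Filter.inter_mem h1 h2)
    have hzint : (z : ℝ) ∈ interior U := mem_interior_iff_mem_nhds.2 hU
    have hzcl : (z : ℝ) ∈ closure (Set.Ioo (0:ℝ) 1) := by
      rw [closure_Ioo (by norm_num : (0:ℝ) ≠ 1)]
      exact z.2
    obtain ⟨y, hyU, hyIoo⟩ := _root_.mem_closure_iff.1 hzcl (interior U) isOpen_interior hzint
    obtain ⟨ε, hε, hball⟩ := Metric.isOpen_iff.1 (isOpen_interior.inter isOpen_Ioo) y ⟨hyU, hyIoo⟩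
    rw [Real.ball_eq_Ioo] at hball
    obtain ⟨q₁, hq₁m, hq₁D⟩ := exists_dyadic_btwn (show y - ε < y + ε by linarith)
    obtain ⟨q₂, hq₂m, hq₂D⟩ := exists_nondyadic_rat_btwn (show y - ε < y + ε by linarith)
    have hq₁V := hball hq₁m
    have hq₂V := hball hq₂m
    have hq₁I : (q₁ : ℝ) ∈ Set.Icc (0:ℝ) 1 := Set.Ioo_subset_Icc_self hq₁V.2
    have hq₂I : (q₂ : ℝ) ∈ Set.Icc (0:ℝ) 1 := Set.Ioo_subset_Icc_self hq₂V.2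
    set p₁ : Set.Icc (0:ℝ) 1 := ⟨(q₁ : ℝ), hq₁I⟩ with hp₁def
    set p₂ : Set.Icc (0:ℝ) 1 := ⟨(q₂ : ℝ), hq₂I⟩ with hp₂def
    have hp₁mem : p₁ ∈ (Fn n) ⁻¹' Metric.ball (Fn n z) 8⁻¹ ∩ interior (A n) :=
      hUsub (show ((q₁ : ℝ)) ∈ U from interior_subset hq₁V.1)
    have hp₂mem : p₂ ∈ (Fn n) ⁻¹' Metric.ball (Fn n z) 8⁻¹ ∩ interior (A n) :=
      hUsub (show ((q₂ : ℝ)) ∈ U from interior_subset hq₂V.1)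
    have hF₁ : F p₁ = 1 := by
      have := hext (q₁ : ℝ) ⟨hq₁I, q₁, rfl⟩
      rw [this]
      simp [hq₁D]
    have hF₂ : F p₂ = 0 := by
      have := hext (q₂ : ℝ) ⟨hq₂I, q₂, rfl⟩
      rw [this]
      simp [hq₂D]
    have d₁ : dist (Fn n p₁) (F p₁) ≤ 4⁻¹ := hAF p₁ (interior_subset hp₁mem.2)
    have d₂ : dist (Fn n p₂) (F p₂) ≤ 4⁻¹ := hAF p₂ (interior_subset hp₂mem.2)
    have d₃ : dist (Fn n p₁) (Fn n z) < 8⁻¹ := Metric.mem_ball.1 hp₁mem.1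
    have d₄ : dist (Fn n p₂) (Fn n z) < 8⁻¹ := Metric.mem_ball.1 hp₂mem.1
    have t4 := dist_triangle4 (F p₁) (Fn n p₁) (Fn n p₂) (F p₂)
    have tmid : dist (Fn n p₁) (Fn n p₂) ≤ dist (Fn n p₁) (Fn n z) + dist (Fn n z) (Fn n p₂) :=
      dist_triangle _ _ _
    have e₁ : dist (F p₁) (Fn n p₁) = dist (Fn n p₁) (F p₁) := dist_comm _ _
    have e₂ : dist (Fn n z) (Fn n p₂) = dist (Fn n p₂) (Fn n z) := dist_comm _ _
    have hone : dist (F p₁) (F p₂) = 1 := by rw [hF₁, hF₂]; simp [Real.dist_eq]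
    linarith [t4, tmid, d₁, d₂, d₃, d₄, e₁, e₂, hone]
end

section
/- The Riemann function f : ℝ → ℝ, defined by f(x) = 1/q if x = p/q in lowest terms with q > 0, and f(x) = 0 if x is irrational, is of the first Borel class (preimages of open sets are Fσ) but not of the first level Borel class (there is a closed set whose preimage is not Fσ). -/
open Set Filter Topology

open Classical in
noncomputable def riemannFunction (x : ℝ) : ℝ :=
  if h : ∃ q : ℚ, (q : ℝ) = x then 1 / (h.choose.den : ℝ) else 0

lemma riemann_rat (q : ℚ) : riemannFunction (q : ℝ) = 1 / (q.den : ℝ) := by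
  rw [riemannFunction]
  have h : ∃ p : ℚ, (p : ℝ) = (q : ℝ) := ⟨q, rfl⟩
  rw [dif_pos h]
  have h2 : h.choose = q := by exact_mod_cast h.choose_spec
  rw [h2]

lemma riemann_irrat {x : ℝ} (h : ¬∃ q : ℚ, (q : ℝ) = x) : riemannFunction x = 0 :=
  dif_neg h

lemma riemann_ne_zero (q : ℚ) : riemannFunction (q : ℝ) ≠ 0 := by
  rw [riemann_rat]
  have : (0 : ℝ) < (q.den : ℝ) := by exact_mod_cast q.pos
  positivity

lemma finite_den_le (N : ℕ) (r : ℝ) :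
    {x : ℝ | (∃ q : ℚ, q.den ≤ N ∧ (q : ℝ) = x) ∧ |x| ≤ r}.Finite := by
  have hT : {q : ℚ | q.den ≤ N ∧ |(q : ℝ)| ≤ r}.Finite := by
    have : Set.MapsTo (fun q : ℚ => (q.num, q.den))
        {q : ℚ | q.den ≤ N ∧ |(q : ℝ)| ≤ r}
        (Set.Icc (-(⌈r * N⌉)) ⌈r * N⌉ ×ˢ Set.Iic N) := by
      rintro q ⟨hden, habs⟩
      have hqd : (0 : ℝ) < (q.den : ℝ) := by exact_mod_cast q.pos
      have hnum : |(q.num : ℝ)| ≤ r * N := by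
        have h1 : |(q.num : ℝ)| = |(q : ℝ)| * (q.den : ℝ) := by
          rw [Rat.cast_def, abs_div, abs_of_nonneg (le_of_lt hqd)]
          field_simp
        rw [h1]
        have hd : (q.den : ℝ) ≤ (N : ℝ) := by exact_mod_cast hden
        have habs0 : 0 ≤ |(q : ℝ)| := abs_nonneg _
        calc |(q : ℝ)| * (q.den : ℝ) ≤ r * (q.den : ℝ) :=
              mul_le_mul_of_nonneg_right habs (le_of_lt hqd)
          _ ≤ r * N := mul_le_mul_of_nonneg_left hd (le_trans habs0 habs)
      have hnum' : |q.num| ≤ ⌈r * N⌉ := by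
        have : (|q.num| : ℝ) ≤ r * N := by exact_mod_cast hnum
        have h2 : (|q.num| : ℝ) ≤ (⌈r * N⌉ : ℝ) := le_trans this (Int.le_ceil _)
        exact_mod_cast h2
      exact ⟨by constructor <;> [linarith [neg_abs_le q.num]; linarith [le_abs_self q.num]], hden⟩
    have hfin : (Set.Icc (-(⌈r * N⌉)) ⌈r * N⌉ ×ˢ Set.Iic N : Set (ℤ × ℕ)).Finite :=
      (Set.finite_Icc _ _).prod (Set.finite_Iic _)
    have hinj : Set.InjOn (fun q : ℚ => (q.num, q.den))
        {q : ℚ | q.den ≤ N ∧ |(q : ℝ)| ≤ r} := by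
      intro a _ b _ hab
      simp only [Prod.mk.injEq] at hab
      exact Rat.ext hab.1 hab.2
    exact Set.Finite.of_finite_image (hfin.subset this.image_subset) hinj
  apply ((hT.image (fun q : ℚ => (q : ℝ)))).subset
  rintro x ⟨⟨q, hden, rfl⟩, habs⟩
  exact ⟨q, ⟨hden, habs⟩, rfl⟩

lemma closed_of_locally_finite {S : Set ℝ}
    (h : ∀ x : ℝ, ∃ V : Set ℝ, IsOpen V ∧ x ∈ V ∧ (S ∩ V).Finite) : IsClosed S := by
  rw [← closure_subset_iff_isClosed]
  intro x hx
  obtain ⟨V, hV, hxV, hfin⟩ := h x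
  have h1 : x ∈ closure (V ∩ S) := hV.inter_closure ⟨hxV, hx⟩
  have h2 : IsClosed (V ∩ S) := (hfin.subset (by exact inter_comm V S ▸ Set.Subset.rfl)).isClosed
  exact ((h2.closure_eq ▸ h1) : x ∈ V ∩ S).2

lemma isFSigma_of_isOpen {U : Set ℝ} (hU : IsOpen U) : IsFSigma U := by
  by_cases h : U = univ
  · exact ⟨fun _ => univ, fun _ => isClosed_univ, by simp [h, Set.iUnion_const]⟩
  · refine ⟨fun n => {x | ((n : ℝ) + 1)⁻¹ ≤ Metric.infDist x Uᶜ}, fun n => ?_, ?_⟩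
    · exact isClosed_le continuous_const (Metric.continuous_infDist_pt _)
    · ext x
      simp only [mem_iUnion, mem_setOf_eq]
      constructor
      · intro hx
        have hne : Uᶜ.Nonempty := Set.nonempty_compl.2 h
        have hpos : 0 < Metric.infDist x Uᶜ :=
          (hU.isClosed_compl.notMem_iff_infDist_pos hne).1 (by simpa using hx)
        obtain ⟨n, hn⟩ := exists_nat_one_div_lt hpos
        exact ⟨n, le_of_lt (by rw [one_div] at hn; exact hn)⟩
      · rintro ⟨n, hn⟩
        by_contra hx
        have : Metric.infDist x Uᶜ = 0 := Metric.infDist_zero_of_mem hx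
        rw [this] at hn
        have : (0 : ℝ) < ((n : ℝ) + 1)⁻¹ := by positivity
        linarith

lemma isFSigma_of_countable {S : Set ℝ} (h : S.Countable) : IsFSigma S := by
  rcases S.eq_empty_or_nonempty with rfl | hne
  · exact ⟨fun _ => ∅, fun _ => isClosed_empty, by simp⟩
  · obtain ⟨g, rfl⟩ := h.exists_eq_range hne
    exact ⟨fun n => {g n}, fun _ => isClosed_singleton, by ext y; simp [eq_comm]⟩

lemma preimage_open_of_zero_mem {U : Set ℝ} (hU : IsOpen U) (h0 : (0 : ℝ) ∈ U) :
    IsOpen (riemannFunction ⁻¹' U) := by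
  rw [← isClosed_compl_iff]
  apply closed_of_locally_finite
  intro x
  obtain ⟨ε, hε, hball⟩ := Metric.isOpen_iff.1 hU 0 h0
  obtain ⟨N, hN⟩ := exists_nat_one_div_lt hε
  refine ⟨Metric.ball x 1, Metric.isOpen_ball, Metric.mem_ball_self one_pos, ?_⟩
  apply (finite_den_le N (|x| + 1)).subset
  rintro y ⟨hy, hyball⟩
  simp only [mem_compl_iff, mem_preimage] at hy
  constructor
  · by_cases hq : ∃ q : ℚ, (q : ℝ) = y
    · obtain ⟨q, rfl⟩ := hq
      refine ⟨q, ?_, rfl⟩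
      by_contra hden
      push_neg at hden
      apply hy
      apply hball
      rw [riemann_rat, Metric.mem_ball, Real.dist_eq, sub_zero]
      have hqd : (0 : ℝ) < (q.den : ℝ) := by exact_mod_cast q.pos
      have hNd : ((N : ℝ) + 1) ≤ (q.den : ℝ) := by exact_mod_cast hden
      rw [abs_of_pos (by positivity)]
      calc 1 / (q.den : ℝ) ≤ 1 / ((N : ℝ) + 1) := by
            apply one_div_le_one_div_of_le (by positivity) hNd
        _ < ε := hN
    · exact absurd (hball (by rw [riemann_irrat hq]; exact Metric.mem_ball_self hε)) hy
  · have : dist y x < 1 := Metric.mem_ball.1 hyball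
    rw [Real.dist_eq] at this
    calc |y| = |x + (y - x)| := by ring_nf
      _ ≤ |x| + |y - x| := abs_add_le _ _
      _ ≤ |x| + 1 := by linarith

lemma not_isFSigma_irrational : ¬ IsFSigma {x : ℝ | ¬∃ q : ℚ, (q : ℝ) = x} := by
  rintro ⟨F, hF, hFeq⟩
  set g : ℕ ⊕ ℚ → Set ℝ := fun i => Sum.elim F (fun q => {(q : ℝ)}) i with hg
  have hclosed : ∀ i, IsClosed (g i) := by
    rintro (n | q)
    · exact hF n
    · exact isClosed_singleton
  have hunion : ⋃ i, g i = univ := by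
    ext x
    simp only [mem_iUnion, mem_univ, iff_true]
    by_cases h : ∃ q : ℚ, (q : ℝ) = x
    · obtain ⟨q, rfl⟩ := h
      exact ⟨Sum.inr q, rfl⟩
    · have hx : x ∈ ⋃ n, F n := hFeq ▸ h
      obtain ⟨n, hn⟩ := mem_iUnion.1 hx
      exact ⟨Sum.inl n, hn⟩
  obtain ⟨i, y, hy⟩ := nonempty_interior_of_iUnion_of_closed hclosed hunion
  obtain ⟨ε, hε, hball'⟩ := Metric.isOpen_iff.1 isOpen_interior y hy
  have hball : Metric.ball y ε ⊆ g i := hball'.trans interior_subset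
  cases i with
  | inl n =>
    obtain ⟨q, hq1, hq2⟩ := exists_rat_btwn (show y - ε < y + ε by linarith)
    have hmem : (q : ℝ) ∈ Metric.ball y ε := by
      rw [Metric.mem_ball, Real.dist_eq, abs_lt]
      constructor <;> linarith
    have h1 : (q : ℝ) ∈ F n := hball hmem
    have h2 : (q : ℝ) ∈ {x : ℝ | ¬∃ p : ℚ, (p : ℝ) = x} := hFeq ▸ mem_iUnion.2 ⟨n, h1⟩
    exact h2 ⟨q, rfl⟩
  | inr q =>
    have h1 : y ∈ Metric.ball y ε := Metric.mem_ball_self hε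
    have h2 : y + ε / 2 ∈ Metric.ball y ε := by
      rw [Metric.mem_ball, Real.dist_eq]
      rw [abs_of_pos (by linarith)]
      linarith
    have e1 : y = (q : ℝ) := hball h1
    have e2 : y + ε / 2 = (q : ℝ) := hball h2
    linarith

theorem riemann_firstBorel_not_firstLevel :
    FirstBorelClass riemannFunction ∧
      ∃ F : Set ℝ, IsClosed F ∧ ¬ IsFSigma (riemannFunction ⁻¹' F) := by
  constructor
  · intro U hU
    by_cases h0 : (0 : ℝ) ∈ U
    · exact isFSigma_of_isOpen (preimage_open_of_zero_mem hU h0)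
    · apply isFSigma_of_countable
      apply (Set.countable_range ((↑) : ℚ → ℝ)).mono
      intro x hx
      by_contra hq
      have hq' : ¬∃ q : ℚ, (q : ℝ) = x := by
        rintro ⟨q, rfl⟩; exact hq ⟨q, rfl⟩
      exact h0 (riemann_irrat hq' ▸ hx)
  · refine ⟨{0}, isClosed_singleton, ?_⟩
    have heq : riemannFunction ⁻¹' {0} = {x : ℝ | ¬∃ q : ℚ, (q : ℝ) = x} := by
      ext x
      simp only [mem_preimage, mem_singleton_iff, mem_setOf_eq]
      constructor
      · rintro hx ⟨q, rfl⟩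
        exact riemann_ne_zero q hx
      · exact riemann_irrat
    rw [heq]
    exact not_isFSigma_irrational
end
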